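/- Let n ≥ 0 be an integer, let a_{j,2l} (0 ≤ j ≤ l ≤ ⌊n/2⌋), b_{j,2l} (1 ≤ j ≤ l ≤ ⌊n/2⌋), a_{j,2l-1} and b_{j,2l-1} (1 ≤ j ≤ l ≤ ⌊(n+1)/2⌋) be real numbers, and define c_{j,2l} := (1/2)·a_{0,2l} + ∑_{k=1}^l ( a_{k,2l}·cos(2k·θ_{j,2l}) + b_{k,2l}·sin(2k·θ_{j,2l}) ) for 0 ≤ j ≤ 2l, 0 ≤ l ≤ ⌊n/2⌋, and c_{j,2l-1} := ∑_{k=1}^l ( a_{k,2l-1}·cos((2k-1)·θ_{j,2l-1}) + b_{k,2l-1}·sin((2k-1)·θ_{j,2l-1}) ) for 0 ≤ j ≤ 2l-1, 1 ≤ l ≤ ⌊(n+1)/2⌋. Let P(x) = ∑_{k=0}^n ∑_{j=0}^k c_{j,k} · U_k(θ_{j,k}; x). Then for every φ ∈ ℝ and t ∈ (-1,1): R_φ(P;t)/√(1-t²) = ∑_{l=0}^{⌊n/2⌋} U_{2l}(t) · [ a_{0,2l} + 2·∑_{j=1}^l ( a_{j,2l}·cos(2jφ) + b_{j,2l}·sin(2jφ)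 ) ] + ∑_{l=1}^{⌊(n+1)/2⌋} U_{2l-1}(t) · [ 2·∑_{j=1}^l ( a_{j,2l-1}·cos((2j-1)φ) + b_{j,2l-1}·sin((2j-1)φ) ) ]. -/

import Mathlib

open MeasureTheory Real Finset

/-- `chebU k` is the Chebyshev polynomial of the second kind of degree `k`,
evaluated as a real function. -/
noncomputable def chebU (k : ℕ) (x : ℝ) : ℝ :=
  (Polynomial.Chebyshev.U ℝ (k : ℤ)).eval x

/-- The ridge polynomial `U_k(θ; x) = U_k(x₁ cos θ + x₂ sin θ)`. -/
noncomputable def ridge (k : ℕ) (θ : ℝ) (x : ℝ × ℝ) : ℝ :=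
  chebU k (x.1 * Real.cos θ + x.2 * Real.sin θ)

/-- The Radon projection `R_θ(f; t)` of `f : ℝ² → ℝ`. -/
noncomputable def radon (f : ℝ × ℝ → ℝ) (θ t : ℝ) : ℝ :=
  ∫ s in (-Real.sqrt (1 - t ^ 2))..(Real.sqrt (1 - t ^ 2)),
    f (t * Real.cos θ - s * Real.sin θ, t * Real.sin θ + s * Real.cos θ)

lemma chebU_add_two (k : ℕ) (x : ℝ) :
    chebU (k + 2) x = 2 * x * chebU (k + 1) x - chebU k x := by
  unfold chebU
  have : ((k + 2 : ℕ) : ℤ) = (k : ℤ) + 2 := by push_cast; ring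
  rw [this, Polynomial.Chebyshev.U_add_two]
  have h2 : ((k + 1 : ℕ) : ℤ) = (k : ℤ) + 1 := by push_cast; ring
  rw [h2]
  simp [Polynomial.eval_mul]

lemma chebU_cos (k : ℕ) (ψ : ℝ) :
    chebU k (Real.cos ψ) = ∑ i ∈ Finset.range (k + 1), Real.cos (((k : ℝ) - 2 * i) * ψ) := by
  induction k using Nat.twoStepInduction with
  | zero => simp [chebU, Polynomial.Chebyshev.U_zero]
  | one =>
    simp only [chebU]
    rw [show ((1 : ℕ) : ℤ) = 1 from rfl, Polynomial.Chebyshev.U_one]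
    rw [Finset.sum_range_succ, Finset.sum_range_one]
    norm_num
    ring
  | more k ih ih1 =>
    rw [chebU_add_two, ih, ih1]
    have key : ∀ a : ℝ, 2 * Real.cos ψ * Real.cos (a * ψ)
        = Real.cos ((a + 1) * ψ) + Real.cos ((a - 1) * ψ) := by
      intro a
      rw [show (a + 1) * ψ = a * ψ + ψ by ring, show (a - 1) * ψ = a * ψ - ψ by ring,
        Real.cos_add, Real.cos_sub]
      ring
    rw [Finset.mul_sum]
    have h1 : ∀ i ∈ Finset.range (k + 2),
        2 * Real.cos ψ * Real.cos ((((k + 1 : ℕ) : ℝ) - 2 * i) * ψ)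
          = Real.cos ((((k + 2 : ℕ) : ℝ) - 2 * i) * ψ) + Real.cos (((k : ℝ) - 2 * i) * ψ) := by
      intro i _
      rw [key (((k + 1 : ℕ) : ℝ) - 2 * i)]
      push_cast
      ring_nf
    rw [Finset.sum_congr rfl h1, Finset.sum_add_distrib,
      Finset.sum_range_succ (fun i => Real.cos ((((k + 2 : ℕ) : ℝ) - 2 * i) * ψ)) (k + 2),
      Finset.sum_range_succ (fun i => Real.cos (((k : ℝ) - 2 * i) * ψ)) (k + 1)]
    rw [show ((k + 2 : ℕ) : ℝ) - 2 * ((k + 2 : ℕ) : ℝ) = (k : ℝ) - 2 * ((k + 1 : ℕ) : ℝ) by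
      push_cast; ring]
    ring

lemma exp_sum_zero (N : ℕ) (hN : 0 < N) (u : ℤ) (hu : u % 2 = 0) (hu0 : u ≠ 0)
    (hub : |u| < 2 * N) :
    ∑ j ∈ Finset.range N, Complex.exp ((((u : ℝ) * (j * π / N)) : ℝ) * Complex.I) = 0 := by
  set z : ℂ := Complex.exp ((((u : ℝ) * (π / N)) : ℝ) * Complex.I) with hz
  have hterm : ∀ j : ℕ, Complex.exp ((((u : ℝ) * (j * π / N)) : ℝ) * Complex.I) = z ^ j := by
    intro j
    rw [hz, ← Complex.exp_nat_mul]
    congr 1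
    push_cast
    ring
  have hz1 : z ≠ 1 := by
    intro h
    rw [hz, Complex.exp_eq_one_iff] at h
    obtain ⟨m, hm⟩ := h
    have him : ((u : ℝ) * (π / N)) = m * (2 * π) := by
      have := congrArg Complex.im hm
      simpa using this
    have hNne : (N : ℝ) ≠ 0 := Nat.cast_ne_zero.mpr hN.ne'
    have hπ : π ≠ 0 := Real.pi_ne_zero
    have hreq : (u : ℝ) * π = (2 * m * N : ℝ) * π := by
      field_simp at him
      linear_combination π * him
    have : (u : ℝ) = 2 * m * N := mul_right_cancel₀ hπ hreq
    have hu' : u = 2 * m * N := by exact_mod_cast this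
    rcases eq_or_ne m 0 with rfl | hm0
    · simp at hu'; omega
    · have h1 : (1 : ℤ) ≤ |m| := Int.one_le_abs hm0
      have h2 : (0 : ℤ) ≤ (N : ℤ) := Int.natCast_nonneg N
      have : (2 * N : ℤ) ≤ |u| := by
        rw [hu', abs_mul, abs_mul, Int.abs_natCast, abs_two]
        nlinarith [h1, h2]
      omega
  have hzN : z ^ N = 1 := by
    rw [hz, ← Complex.exp_nat_mul]
    obtain ⟨m, hm⟩ : ∃ m : ℤ, u = m * 2 := ⟨u / 2, by omega⟩
    have : (N : ℂ) * (((u : ℝ) * (π / N)) : ℝ) * Complex.I = m * (2 * π * Complex.I) := by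
      have hNne : (N : ℝ) ≠ 0 := Nat.cast_ne_zero.mpr hN.ne'
      have : (N : ℝ) * ((u : ℝ) * (π / N)) = (m : ℝ) * (2 * π) := by
        field_simp
        rw [hm]; push_cast; ring
      push_cast at this ⊢
      rw [show ((N:ℂ) * ((u:ℂ) * (π / N)) * Complex.I) = (((N:ℂ) * ((u:ℂ) * (π / N)))) * Complex.I by ring]
      rw_mod_cast [this]
      push_cast
      ring
    rw [show (N : ℂ) * ((((u : ℝ) * (π / N)) : ℝ) * Complex.I) = (N : ℂ) * (((u : ℝ) * (π / N)) : ℝ) * Complex.I by ring, this]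
    exact Complex.exp_int_mul_two_pi_mul_I m
  calc ∑ j ∈ Finset.range N, Complex.exp ((((u : ℝ) * (j * π / N)) : ℝ) * Complex.I)
      = ∑ j ∈ Finset.range N, z ^ j := Finset.sum_congr rfl fun j _ => hterm j
    _ = (z ^ N - 1) / (z - 1) := geom_sum_eq hz1 N
    _ = 0 := by rw [hzN]; simp

lemma sum_cos_eq (N : ℕ) (hN : 0 < N) (u : ℤ) (hu : u % 2 = 0) (hub : |u| < 2 * N) :
    ∑ j ∈ Finset.range N, Real.cos ((u : ℝ) * (j * π / N)) = if u = 0 then (N : ℝ) else 0 := by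
  rcases eq_or_ne u 0 with rfl | hu0
  · simp
  · rw [if_neg hu0]
    have key : ∑ j ∈ Finset.range N, Real.cos ((u : ℝ) * (j * π / N))
        = (∑ j ∈ Finset.range N, Complex.exp ((((u : ℝ) * (j * π / N)) : ℝ) * Complex.I)).re := by
      rw [Complex.re_sum]
      exact Finset.sum_congr rfl fun j _ => (Complex.exp_ofReal_mul_I_re _).symm
    rw [key, exp_sum_zero N hN u hu hu0 hub]
    simp

lemma sum_sin_eq (N : ℕ) (hN : 0 < N) (u : ℤ) (hu : u % 2 = 0) (hub : |u| < 2 * N) :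
    ∑ j ∈ Finset.range N, Real.sin ((u : ℝ) * (j * π / N)) = 0 := by
  rcases eq_or_ne u 0 with rfl | hu0
  · simp
  · have key : ∑ j ∈ Finset.range N, Real.sin ((u : ℝ) * (j * π / N))
        = (∑ j ∈ Finset.range N, Complex.exp ((((u : ℝ) * (j * π / N)) : ℝ) * Complex.I)).im := by
      rw [Complex.im_sum]
      exact Finset.sum_congr rfl fun j _ => (Complex.exp_ofReal_mul_I_im _).symm
    rw [key, exp_sum_zero N hN u hu hu0 hub]
    simp

lemma sum_trig_chebU (k p : ℕ) (hp : p ≤ k) (hpar : p % 2 = k % 2) (A B φ : ℝ) :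
    ∑ j ∈ Finset.range (k + 1),
      (A * Real.cos (p * (j * π / ((k : ℝ) + 1))) + B * Real.sin (p * (j * π / ((k : ℝ) + 1))))
        * chebU k (Real.cos (j * π / ((k : ℝ) + 1) - φ))
    = ((k : ℝ) + 1) * (A * Real.cos (p * φ) + B * Real.sin (p * φ)) := by
  have hN : 0 < k + 1 := Nat.succ_pos k
  simp only [chebU_cos, Finset.mul_sum]
  rw [Finset.sum_comm]
  set C : ℝ := ((k : ℝ) + 1) / 2 * (A * Real.cos (p * φ) + B * Real.sin (p * φ)) with hC
  have inner : ∀ i ∈ Finset.range (k + 1),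
      (∑ j ∈ Finset.range (k + 1),
        (A * Real.cos (p * (j * π / ((k : ℝ) + 1))) + B * Real.sin (p * (j * π / ((k : ℝ) + 1))))
          * Real.cos (((k : ℝ) - 2 * i) * (j * π / ((k : ℝ) + 1) - φ)))
      = (if (k : ℤ) - 2 * i = (p : ℤ) then C else 0)
        + (if (k : ℤ) - 2 * i = -(p : ℤ) then C else 0) := by
    intro i hi
    rw [Finset.mem_range] at hi
    set u₁ : ℤ := (p : ℤ) + ((k : ℤ) - 2 * i) with hu₁
    set u₂ : ℤ := (p : ℤ) - ((k : ℤ) - 2 * i) with hu₂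
    set d : ℝ := (k : ℝ) - 2 * i with hd
    set z : ℝ := d * φ with hz
    have e1 := sum_cos_eq (k + 1) hN u₁ (by omega) (by rw [abs_lt]; omega)
    have e2 := sum_cos_eq (k + 1) hN u₂ (by omega) (by rw [abs_lt]; omega)
    have e3 := sum_sin_eq (k + 1) hN u₁ (by omega) (by rw [abs_lt]; omega)
    have e4 := sum_sin_eq (k + 1) hN u₂ (by omega) (by rw [abs_lt]; omega)
    have split : (∑ j ∈ Finset.range (k + 1),
        (A * Real.cos (p * (j * π / ((k : ℝ) + 1))) + B * Real.sin (p * (j * π / ((k : ℝ) + 1))))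
          * Real.cos (d * (j * π / ((k : ℝ) + 1) - φ)))
        = (A * Real.cos z / 2 - B * Real.sin z / 2)
            * ∑ j ∈ Finset.range (k + 1), Real.cos ((u₁ : ℝ) * (j * π / ((k + 1 : ℕ) : ℝ)))
          + (A * Real.cos z / 2 + B * Real.sin z / 2)
            * ∑ j ∈ Finset.range (k + 1), Real.cos ((u₂ : ℝ) * (j * π / ((k + 1 : ℕ) : ℝ)))
          + (A * Real.sin z / 2 + B * Real.cos z / 2)
            * ∑ j ∈ Finset.range (k + 1), Real.sin ((u₁ : ℝ) * (j * π / ((k + 1 : ℕ) : ℝ)))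
          + (B * Real.cos z / 2 - A * Real.sin z / 2)
            * ∑ j ∈ Finset.range (k + 1), Real.sin ((u₂ : ℝ) * (j * π / ((k + 1 : ℕ) : ℝ))) := by
      rw [Finset.mul_sum, Finset.mul_sum, Finset.mul_sum, Finset.mul_sum,
        ← Finset.sum_add_distrib, ← Finset.sum_add_distrib, ← Finset.sum_add_distrib]
      apply Finset.sum_congr rfl
      intro j _
      have hθ : ((k + 1 : ℕ) : ℝ) = (k : ℝ) + 1 := by push_cast; ring
      rw [hθ]
      set θj : ℝ := (j : ℝ) * π / ((k : ℝ) + 1) with hθj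
      have h1 : (u₁ : ℝ) * θj = (p : ℝ) * θj + d * θj := by
        rw [hu₁, hd]; push_cast; ring
      have h2 : (u₂ : ℝ) * θj = (p : ℝ) * θj - d * θj := by
        rw [hu₂, hd]; push_cast; ring
      have h3 : d * (θj - φ) = d * θj - z := by rw [hz]; ring
      rw [h1, h2, h3, Real.cos_add, Real.cos_sub, Real.sin_add, Real.sin_sub, Real.cos_sub]
      ring
    rw [split, e1, e2, e3, e4]
    have hq1 : (u₁ = 0) ↔ ((k : ℤ) - 2 * i = -(p : ℤ)) := by rw [hu₁]; omega
    have hq2 : (u₂ = 0) ↔ ((k : ℤ) - 2 * i = (p : ℤ)) := by rw [hu₂]; omega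
    simp only [hq1, hq2]
    rcases eq_or_ne ((k : ℤ) - 2 * i) (p : ℤ) with h | h <;>
      rcases eq_or_ne ((k : ℤ) - 2 * i) (-(p : ℤ)) with h' | h'
    · -- both: p = 0, d = 0
      have hki : (k : ℤ) = 2 * i := by omega
      have hkr : (k : ℝ) = 2 * i := by exact_mod_cast hki
      have hp0 : p = 0 := by omega
      have hd0 : d = 0 := by rw [hd, hkr]; ring
      rw [if_pos h, if_pos h', if_pos h, if_pos h', hz, hd0, hC, hp0]
      push_cast
      simp only [zero_mul, mul_zero, Real.cos_zero, Real.sin_zero]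
      ring
    · -- q = p only
      have hdp : d = (p : ℝ) := by rw [hd]; exact_mod_cast h
      rw [if_pos h, if_neg h', if_pos h, if_neg h', hz, hdp, hC]
      push_cast
      ring
    · -- q = -p only
      have hdp : d = -(p : ℝ) := by rw [hd]; exact_mod_cast h'
      rw [if_neg h, if_pos h', if_neg h, if_pos h', hz, hdp, hC]
      push_cast
      rw [show -(p : ℝ) * φ = -((p : ℝ) * φ) by ring, Real.cos_neg, Real.sin_neg]
      ring
    · rw [if_neg h, if_neg h', if_neg h, if_neg h']
      ring
  rw [Finset.sum_congr rfl inner, Finset.sum_add_distrib]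
  have key1 : ∑ i ∈ Finset.range (k + 1), (if (k : ℤ) - 2 * i = (p : ℤ) then C else 0) = C := by
    have : ∀ i ∈ Finset.range (k + 1),
        (if (k : ℤ) - 2 * i = (p : ℤ) then C else 0) = (if i = (k - p) / 2 then C else 0) := by
      intro i hi
      rw [Finset.mem_range] at hi
      congr 1
      apply propext
      constructor <;> intro <;> omega
    rw [Finset.sum_congr rfl this, Finset.sum_ite_eq' (Finset.range (k + 1)) ((k - p) / 2)
      (fun _ => C), if_pos (Finset.mem_range.mpr (by omega))]
  have key2 : ∑ i ∈ Finset.range (k + 1), (if (k : ℤ) - 2 * i = -(p : ℤ) then C else 0) = C := by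
    have : ∀ i ∈ Finset.range (k + 1),
        (if (k : ℤ) - 2 * i = -(p : ℤ) then C else 0) = (if i = (k + p) / 2 then C else 0) := by
      intro i hi
      rw [Finset.mem_range] at hi
      congr 1
      apply propext
      constructor <;> intro <;> omega
    rw [Finset.sum_congr rfl this, Finset.sum_ite_eq' (Finset.range (k + 1)) ((k + p) / 2)
      (fun _ => C), if_pos (Finset.mem_range.mpr (by omega))]
  rw [key1, key2, hC]
  ring

lemma chebU_continuous (k : ℕ) : Continuous (chebU k) := by
  unfold chebU; exact Polynomial.continuous _

lemma radon_ridge (k : ℕ) (θ φ t : ℝ) (ht : t ∈ Set.Ioo (-1 : ℝ) 1) :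
    radon (ridge k θ) φ t
      = 2 / ((k : ℝ) + 1) * Real.sqrt (1 - t ^ 2) * chebU k t
          * chebU k (Real.cos (θ - φ)) := by
  obtain ⟨ht1, ht2⟩ := ht
  have hpos : 0 < 1 - t ^ 2 := by nlinarith
  set h : ℝ := Real.sqrt (1 - t ^ 2) with hhdef
  have hh : 0 < h := Real.sqrt_pos.mpr hpos
  set α : ℝ := Real.arccos t with hα
  have hcos : Real.cos α = t := Real.cos_arccos ht1.le ht2.le
  have hsin : Real.sin α = h := by rw [hα, Real.sin_arccos, hhdef]
  set β : ℝ := θ - φ with hβ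
  have hkne : ((k : ℝ) + 1) ≠ 0 := by positivity
  have hint : radon (ridge k θ) φ t
      = ∫ s in (-h)..h, chebU k (t * Real.cos β + s * Real.sin β) := by
    unfold radon ridge
    apply intervalIntegral.integral_congr
    intro s _
    simp only
    congr 1
    rw [hβ, Real.cos_sub, Real.sin_sub]
    ring
  rcases eq_or_ne (Real.sin β) 0 with hsb | hsb
  · -- degenerate direction
    have hsq : (Real.cos β - 1) * (Real.cos β + 1) = 0 := by
      nlinarith [Real.sin_sq_add_cos_sq β]
    have hU1 : ∀ ψ : ℝ, chebU k (Real.cos ψ)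
        = ∑ i ∈ Finset.range (k + 1), Real.cos (((k : ℝ) - 2 * i) * ψ) := chebU_cos k
    rcases mul_eq_zero.mp hsq with hcb | hcb
    · have hcb1 : Real.cos β = 1 := by linarith
      rw [hint]
      simp only [hsb, hcb1, mul_one, mul_zero, add_zero]
      rw [intervalIntegral.integral_const]
      have hone : chebU k (1 : ℝ) = (k : ℝ) + 1 := by
        rw [show (1 : ℝ) = Real.cos 0 by simp, hU1 0]
        simp
      rw [hone, smul_eq_mul]
      rw [show 2 / ((k : ℝ) + 1) * h * chebU k t * ((k : ℝ) + 1) = 2 * h * chebU k t by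
        field_simp]
      ring
    · have hcb1 : Real.cos β = -1 := by linarith
      rw [hint]
      have harg : ∀ s : ℝ, t * Real.cos β + s * Real.sin β = Real.cos (π - α) := by
        intro s
        rw [hcb1, hsb, Real.cos_pi_sub, hcos]
        ring
      have hIc : (∫ s in (-h)..h, chebU k (t * Real.cos β + s * Real.sin β))
          = (h - (-h)) • chebU k (Real.cos (π - α)) := by
        rw [show (fun s => chebU k (t * Real.cos β + s * Real.sin β))
            = fun _ => chebU k (Real.cos (π - α)) from funext fun s => by rw [harg s]]
        exact intervalIntegral.integral_const _
      rw [hIc, hU1 (π - α)]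
      have hterm : ∀ i : ℕ, Real.cos (((k : ℝ) - 2 * i) * (π - α))
          = Real.cos ((k : ℝ) * π) * Real.cos (((k : ℝ) - 2 * i) * α) := by
        intro i
        have e1 : ((k : ℝ) - 2 * i) * (π - α)
            = ((k : ℝ) * π - ((k : ℝ) - 2 * i) * α) - (i : ℤ) * (2 * π) := by
          push_cast; ring
        rw [e1, Real.cos_sub_int_mul_two_pi, Real.cos_sub]
        have e2 : Real.sin ((k : ℝ) * π) = 0 := by exact_mod_cast Real.sin_nat_mul_pi k
        rw [e2]
        ring
      rw [Finset.sum_congr rfl fun i _ => hterm i, ← Finset.mul_sum]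
      have hcpi : chebU k (Real.cos β) = ((k : ℝ) + 1) * Real.cos ((k : ℝ) * π) := by
        rw [show Real.cos β = Real.cos π by rw [Real.cos_pi, hcb1], hU1 π]
        have : ∀ i ∈ Finset.range (k + 1), Real.cos (((k : ℝ) - 2 * i) * π)
            = Real.cos ((k : ℝ) * π) := by
          intro i _
          have e1 : ((k : ℝ) - 2 * i) * π = (k : ℝ) * π - (i : ℤ) * (2 * π) := by
            push_cast; ring
          rw [e1, Real.cos_sub_int_mul_two_pi]
        rw [Finset.sum_congr rfl this, Finset.sum_const, Finset.card_range]
        push_cast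
        ring
      have hUt : chebU k t = ∑ i ∈ Finset.range (k + 1), Real.cos (((k : ℝ) - 2 * i) * α) := by
        rw [← hcos, hU1 α]
      rw [hcpi, hUt]
      simp only [smul_eq_mul]
      field_simp
      ring_nf
      simp only [mul_comm, mul_assoc, mul_left_comm]
  · -- main case: sin β ≠ 0
    have hderiv : ∀ s : ℝ,
        HasDerivAt (fun s : ℝ => (Polynomial.Chebyshev.T ℝ ((k : ℤ) + 1)).eval
            (t * Real.cos β + s * Real.sin β) / (((k : ℝ) + 1) * Real.sin β))
          (chebU k (t * Real.cos β + s * Real.sin β)) s := by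
      intro s
      have h1 : HasDerivAt (fun s : ℝ => t * Real.cos β + s * Real.sin β) (Real.sin β) s := by
        simpa using ((hasDerivAt_id s).mul_const (Real.sin β)).const_add (t * Real.cos β)
      have h2 := ((Polynomial.Chebyshev.T ℝ ((k : ℤ) + 1)).hasDerivAt
        (t * Real.cos β + s * Real.sin β)).comp s h1
      have h3 := h2.div_const (((k : ℝ) + 1) * Real.sin β)
      refine h3.congr_deriv ?_
      rw [Polynomial.Chebyshev.T_derivative_eq_U]
      have : ((k : ℤ) + 1 - 1) = (k : ℤ) := by ring
      rw [this]
      unfold chebU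
      simp only [Polynomial.eval_mul, Polynomial.eval_intCast]
      push_cast
      field_simp
    have hcont : Continuous fun s : ℝ => chebU k (t * Real.cos β + s * Real.sin β) :=
      (chebU_continuous k).comp (by continuity)
    rw [hint, intervalIntegral.integral_eq_sub_of_hasDerivAt (fun x _ => hderiv x)
      (hcont.intervalIntegrable _ _)]
    have e1 : t * Real.cos β + h * Real.sin β = Real.cos (α - β) := by
      rw [Real.cos_sub α β, hcos, hsin]
    have e2 : t * Real.cos β + (-h) * Real.sin β = Real.cos (α + β) := by
      rw [Real.cos_add α β, hcos, hsin]; ring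
    rw [e1, e2, Polynomial.Chebyshev.T_real_cos, Polynomial.Chebyshev.T_real_cos,
      div_sub_div_same]
    have hU1 : Real.sin (((k : ℝ) + 1) * α) = chebU k t * h := by
      have := Polynomial.Chebyshev.U_real_cos α (k : ℤ)
      rw [hcos, hsin] at this
      push_cast at this
      rw [← this]
      rfl
    have hU2 : Real.sin (((k : ℝ) + 1) * β) = chebU k (Real.cos β) * Real.sin β := by
      have := Polynomial.Chebyshev.U_real_cos β (k : ℤ)
      push_cast at this
      rw [← this]
      rfl
    have key : Real.cos (((k : ℝ) + 1) * (α - β)) - Real.cos (((k : ℝ) + 1) * (α + β))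
        = 2 * Real.sin (((k : ℝ) + 1) * α) * Real.sin (((k : ℝ) + 1) * β) := by
      rw [mul_sub, mul_add, Real.cos_sub (((k : ℝ) + 1) * α) (((k : ℝ) + 1) * β),
        Real.cos_add (((k : ℝ) + 1) * α) (((k : ℝ) + 1) * β)]
      ring
    push_cast
    rw [key, hU1, hU2]
    field_simp

lemma sum_split (f : ℕ → ℝ) (n : ℕ) :
    ∑ k ∈ Finset.range (n + 1), f k
      = ∑ l ∈ Finset.range (n / 2 + 1), f (2 * l)
        + ∑ l ∈ Finset.Icc 1 ((n + 1) / 2), f (2 * l - 1) := by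
  induction n with
  | zero => simp
  | succ n ih =>
    rw [Finset.sum_range_succ, ih]
    rcases Nat.even_or_odd n with ⟨m, hm⟩ | ⟨m, hm⟩
    · have h1 : (n + 1) / 2 = m := by omega
      have h2 : (n + 1 + 1) / 2 = m + 1 := by omega
      have h3 : n / 2 = m := by omega
      have h4 : (n + 1) / 2 + 1 = m + 1 := by omega
      rw [h1, h2, h3, Finset.sum_Icc_succ_top (by omega : 1 ≤ m + 1)]
      rw [show 2 * (m + 1) - 1 = n + 1 by omega]
      ring
    · have h1 : (n + 1) / 2 = m + 1 := by omega
      have h2 : (n + 1 + 1) / 2 = m + 1 := by omega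
      have h3 : n / 2 = m := by omega
      have h4 : (n + 1) / 2 + 1 = m + 2 := by omega
      rw [h1, h2, h3, Finset.sum_range_succ (fun l => f (2 * l)) (m + 1)]
      rw [show 2 * (m + 1) = n + 1 by omega]
      ring

lemma radon_linear (n : ℕ) (c : ℕ → ℕ → ℝ) (P : ℝ × ℝ → ℝ)
    (hP : P = fun x => ∑ k ∈ Finset.range (n + 1), ∑ j ∈ Finset.range (k + 1),
      c j k * ridge k (j * π / (k + 1)) x) (φ t : ℝ) :
    radon P φ t = ∑ k ∈ Finset.range (n + 1), ∑ j ∈ Finset.range (k + 1),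
      c j k * radon (ridge k (j * π / (k + 1))) φ t := by
  unfold radon
  rw [hP]
  rw [intervalIntegral.integral_finset_sum]
  · apply Finset.sum_congr rfl
    intro k _
    rw [intervalIntegral.integral_finset_sum]
    · apply Finset.sum_congr rfl
      intro j _
      rw [← intervalIntegral.integral_const_mul]
    · intro j _
      apply Continuous.intervalIntegrable
      apply Continuous.mul continuous_const
      unfold ridge
      exact (chebU_continuous k).comp (by continuity)
  · intro k _
    apply Continuous.intervalIntegrable
    apply continuous_finset_sum
    intro j _
    apply Continuous.mul continuous_const
    unfold ridge
    exact (chebU_continuous k).comp (by continuity)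

/-- Lemma 2.3: if the coefficients `c_{j,k}` of
`P(x) = ∑_{k=0}^n ∑_{j=0}^k c_{j,k} U_k(θ_{j,k}; x)` (with `θ_{j,k} = jπ/(k+1)`)
are given in terms of `a_{j,k}`, `b_{j,k}` by (2.3) and (2.4), then
`R_φ(P;t)/√(1-t²)` has the trigonometric expansion (2.2). -/
theorem radon_trig_expansion (n : ℕ) (a b c : ℕ → ℕ → ℝ)
    (hceven : ∀ l ≤ n / 2, ∀ j ≤ 2 * l,
      c j (2 * l) = (1 / 2) * a 0 (2 * l) + ∑ k ∈ Finset.Icc 1 l,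
        (a k (2 * l) * Real.cos ((2 * k : ℕ) * (j * π / (2 * l + 1))) +
         b k (2 * l) * Real.sin ((2 * k : ℕ) * (j * π / (2 * l + 1)))))
    (hcodd : ∀ l, 1 ≤ l → l ≤ (n + 1) / 2 → ∀ j ≤ 2 * l - 1,
      c j (2 * l - 1) = ∑ k ∈ Finset.Icc 1 l,
        (a k (2 * l - 1) * Real.cos ((2 * k - 1 : ℕ) * (j * π / (2 * l))) +
         b k (2 * l - 1) * Real.sin ((2 * k - 1 : ℕ) * (j * π / (2 * l)))))
    (P : ℝ × ℝ → ℝ)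
    (hP : P = fun x => ∑ k ∈ Finset.range (n + 1), ∑ j ∈ Finset.range (k + 1),
      c j k * ridge k (j * π / (k + 1)) x)
    (φ t : ℝ) (ht : t ∈ Set.Ioo (-1 : ℝ) 1) :
    radon P φ t / Real.sqrt (1 - t ^ 2) =
      (∑ l ∈ Finset.range (n / 2 + 1), chebU (2 * l) t *
        (a 0 (2 * l) + 2 * ∑ j ∈ Finset.Icc 1 l,
          (a j (2 * l) * Real.cos ((2 * j : ℕ) * φ) +
           b j (2 * l) * Real.sin ((2 * j : ℕ) * φ)))) +
      ∑ l ∈ Finset.Icc 1 ((n + 1) / 2), chebU (2 * l - 1) t *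
        (2 * ∑ j ∈ Finset.Icc 1 l,
          (a j (2 * l - 1) * Real.cos ((2 * j - 1 : ℕ) * φ) +
           b j (2 * l - 1) * Real.sin ((2 * j - 1 : ℕ) * φ))) := by
  obtain ⟨ht1, ht2⟩ := ht
  have hpos : 0 < 1 - t ^ 2 := by nlinarith
  have hh : 0 < Real.sqrt (1 - t ^ 2) := Real.sqrt_pos.mpr hpos
  set h : ℝ := Real.sqrt (1 - t ^ 2) with hhdef
  -- the inner sum for each k
  set g : ℕ → ℝ := fun k => 2 / ((k : ℝ) + 1)
      * ∑ j ∈ Finset.range (k + 1), c j k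
          * chebU k (Real.cos ((j : ℝ) * π / ((k : ℝ) + 1) - φ)) with hg
  set f : ℕ → ℝ := fun k => chebU k t * g k with hf
  have step1 : radon P φ t = h * ∑ k ∈ Finset.range (n + 1), f k := by
    rw [radon_linear n c P hP φ t]
    have hterm : ∀ k ∈ Finset.range (n + 1),
        (∑ j ∈ Finset.range (k + 1), c j k * radon (ridge k (j * π / (k + 1))) φ t)
          = h * f k := by
      intro k _
      rw [hf, hg]
      simp only
      rw [Finset.mul_sum, Finset.mul_sum, Finset.mul_sum]
      apply Finset.sum_congr rfl
      intro j _
      rw [radon_ridge k ((j : ℝ) * π / ((k : ℝ) + 1)) φ t ⟨ht1, ht2⟩]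
      rw [← hhdef]
      ring
    rw [Finset.sum_congr rfl hterm, ← Finset.mul_sum]
  rw [step1, mul_comm, mul_div_assoc, div_self hh.ne', mul_one]
  rw [sum_split f n]
  congr 1
  · -- even part
    apply Finset.sum_congr rfl
    intro l hl
    rw [Finset.mem_range] at hl
    have hl' : l ≤ n / 2 := by omega
    rw [hf, hg]
    simp only
    rw [mul_comm (2 / (((2 * l : ℕ) : ℝ) + 1)) _]
    congr 1
    -- goal : (∑ j ..) * (2/(2l+1)) = bracket
    have hden : ((2 * l : ℕ) : ℝ) + 1 = 2 * (l : ℝ) + 1 := by push_cast; ring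
    have hNne : 2 * (l : ℝ) + 1 ≠ 0 := by positivity
    -- expand c
    have hexp : ∑ j ∈ Finset.range (2 * l + 1), c j (2 * l)
          * chebU (2 * l) (Real.cos ((j : ℝ) * π / (((2 * l : ℕ) : ℝ) + 1) - φ))
        = (∑ j ∈ Finset.range (2 * l + 1),
            ((1 / 2 * a 0 (2 * l)) * Real.cos ((0 : ℕ) * ((j : ℝ) * π / (((2 * l : ℕ) : ℝ) + 1)))
              + 0 * Real.sin ((0 : ℕ) * ((j : ℝ) * π / (((2 * l : ℕ) : ℝ) + 1))))
              * chebU (2 * l) (Real.cos ((j : ℝ) * π / (((2 * l : ℕ) : ℝ) + 1) - φ)))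
          + ∑ m ∈ Finset.Icc 1 l, ∑ j ∈ Finset.range (2 * l + 1),
              ((a m (2 * l)) * Real.cos (((2 * m : ℕ) : ℝ) * ((j : ℝ) * π / (((2 * l : ℕ) : ℝ) + 1)))
                + b m (2 * l) * Real.sin (((2 * m : ℕ) : ℝ) * ((j : ℝ) * π / (((2 * l : ℕ) : ℝ) + 1))))
                * chebU (2 * l) (Real.cos ((j : ℝ) * π / (((2 * l : ℕ) : ℝ) + 1) - φ)) := by
      rw [Finset.sum_comm]
      rw [← Finset.sum_add_distrib]
      apply Finset.sum_congr rfl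
      intro j hj
      rw [Finset.mem_range] at hj
      rw [hceven l hl' j (by omega)]
      simp only [hden, Nat.cast_zero, zero_mul, Real.cos_zero, Real.sin_zero, mul_zero,
        mul_one, add_zero]
      rw [add_mul, Finset.sum_mul]
    rw [hexp]
    have base := sum_trig_chebU (2 * l) 0 (by omega) (by omega) (1 / 2 * a 0 (2 * l)) 0 φ
    have main : ∀ m ∈ Finset.Icc 1 l,
        ∑ j ∈ Finset.range (2 * l + 1),
            ((a m (2 * l)) * Real.cos (((2 * m : ℕ) : ℝ) * ((j : ℝ) * π / (((2 * l : ℕ) : ℝ) + 1)))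
              + b m (2 * l) * Real.sin (((2 * m : ℕ) : ℝ) * ((j : ℝ) * π / (((2 * l : ℕ) : ℝ) + 1))))
              * chebU (2 * l) (Real.cos ((j : ℝ) * π / (((2 * l : ℕ) : ℝ) + 1) - φ))
        = (((2 * l : ℕ) : ℝ) + 1) * (a m (2 * l) * Real.cos (((2 * m : ℕ) : ℝ) * φ)
            + b m (2 * l) * Real.sin (((2 * m : ℕ) : ℝ) * φ)) := by
      intro m hm
      rw [Finset.mem_Icc] at hm
      exact sum_trig_chebU (2 * l) (2 * m) (by omega) (by omega) (a m (2 * l)) (b m (2 * l)) φ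
    rw [base, Finset.sum_congr rfl main, ← Finset.mul_sum]
    rw [hden]
    push_cast
    simp only [zero_mul, mul_zero, Real.cos_zero, Real.sin_zero, mul_one, add_zero]
    field_simp
    ring_nf
    simp only [mul_comm, mul_assoc, mul_left_comm]
  · -- odd part
    apply Finset.sum_congr rfl
    intro l hl
    rw [Finset.mem_Icc] at hl
    obtain ⟨hl1, hl2⟩ := hl
    rw [hf, hg]
    simp only
    rw [mul_comm (2 / (((2 * l - 1 : ℕ) : ℝ) + 1)) _]
    congr 1
    have hk1 : (2 * l - 1) + 1 = 2 * l := by omega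
    have hden : ((2 * l - 1 : ℕ) : ℝ) + 1 = 2 * (l : ℝ) := by
      have : (((2 * l - 1) + 1 : ℕ) : ℝ) = ((2 * l : ℕ) : ℝ) := by rw [hk1]
      push_cast at this
      linarith [this]
    have hNne : 2 * (l : ℝ) ≠ 0 := by positivity
    have hexp : ∑ j ∈ Finset.range ((2 * l - 1) + 1), c j (2 * l - 1)
          * chebU (2 * l - 1) (Real.cos ((j : ℝ) * π / (((2 * l - 1 : ℕ) : ℝ) + 1) - φ))
        = ∑ m ∈ Finset.Icc 1 l, ∑ j ∈ Finset.range ((2 * l - 1) + 1),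
              ((a m (2 * l - 1)) * Real.cos (((2 * m - 1 : ℕ) : ℝ)
                  * ((j : ℝ) * π / (((2 * l - 1 : ℕ) : ℝ) + 1)))
                + b m (2 * l - 1) * Real.sin (((2 * m - 1 : ℕ) : ℝ)
                  * ((j : ℝ) * π / (((2 * l - 1 : ℕ) : ℝ) + 1))))
                * chebU (2 * l - 1) (Real.cos ((j : ℝ) * π / (((2 * l - 1 : ℕ) : ℝ) + 1) - φ)) := by
      rw [Finset.sum_comm]
      apply Finset.sum_congr rfl
      intro j hj
      rw [Finset.mem_range] at hj
      rw [hcodd l hl1 hl2 j (by omega)]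
      simp only [hden]
      rw [Finset.sum_mul]
    rw [hexp]
    have main : ∀ m ∈ Finset.Icc 1 l,
        ∑ j ∈ Finset.range ((2 * l - 1) + 1),
            ((a m (2 * l - 1)) * Real.cos (((2 * m - 1 : ℕ) : ℝ)
                * ((j : ℝ) * π / (((2 * l - 1 : ℕ) : ℝ) + 1)))
              + b m (2 * l - 1) * Real.sin (((2 * m - 1 : ℕ) : ℝ)
                * ((j : ℝ) * π / (((2 * l - 1 : ℕ) : ℝ) + 1))))
              * chebU (2 * l - 1) (Real.cos ((j : ℝ) * π / (((2 * l - 1 : ℕ) : ℝ) + 1) - φ))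
        = (((2 * l - 1 : ℕ) : ℝ) + 1) * (a m (2 * l - 1) * Real.cos (((2 * m - 1 : ℕ) : ℝ) * φ)
            + b m (2 * l - 1) * Real.sin (((2 * m - 1 : ℕ) : ℝ) * φ)) := by
      intro m hm
      rw [Finset.mem_Icc] at hm
      exact sum_trig_chebU (2 * l - 1) (2 * m - 1) (by omega) (by omega)
        (a m (2 * l - 1)) (b m (2 * l - 1)) φ
    rw [Finset.sum_congr rfl main, ← Finset.mul_sum]
    rw [hden]
    field_simp
    ring_nf
    simp only [mul_comm, mul_assoc, mul_left_comm]
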